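/- arXiv:cs/0607032 — 2 statements merged into one kernel-verified Lean document; each statement's English description precedes it below -/
import Mathlib

section
/- The sequence n·(e − B(n)) converges to e/2 as n → ∞; equivalently, writing Δ(n) := e − B(n), one has Δ(n) ~ c₁·c₆/n where c₀ = (e−2)/(e−1), c₁ = e/(2(e−1)), c₆ = 1/(1−c₀) = e−1 and c₁·c₆ = e/2. -/
/-!
Write `Δ n = e - B n`, `A n = (1 - 1/n)^(n-1)` and `D n = 1 - (1 - 1/n)^n - (1/n)^n`. The recurrence
becomes the linear recurrence `n Δ n = ρ n · (n - 1) Δ (n - 1) + t n` with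
`ρ n = (1 - A n / D n) · n / (n - 1)` and `t n = n (e A n - 1) / D n`. Since `A n → e⁻¹` and
`D n → 1 - e⁻¹`, the multipliers `ρ n` tend to `c₀ = (e - 2)/(e - 1)`, of modulus `< 1`, and since
`e A n = exp (1 + (n - 1) log (1 - 1/n)) = exp (1/(2n) + O(1/n²))`, the forcing terms `t n` tend to
`c₁ = e/(2(e - 1))`. A contracting linear recurrence with convergent coefficients converges to the
fixed point `c₁ / (1 - c₀) = e/2`.
-/

open Filter Topology Real

section LinearRecurrence

variable {E : Type*} [NormedAddCommGroup E] [NormedSpace ℝ E]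

theorem tendsto_zero_of_linear_recurrence {ρ : ℕ → ℝ} {ε y : ℕ → E} {c : ℝ} (hc : |c| < 1)
    (hρ : Tendsto ρ atTop (𝓝 c)) (hε : Tendsto ε atTop (𝓝 0))
    (hrec : ∀ᶠ n in atTop, y n = ρ n • y (n - 1) + ε n) :
    Tendsto y atTop (𝓝 0) := by
  refine Metric.tendsto_nhds.2 fun δ hδ => ?_
  obtain ⟨r, hcr, hr1⟩ := exists_between hc
  have hr0 : 0 ≤ r := (abs_nonneg c).trans hcr.le
  -- once `|ρ n| ≤ r` and `‖ε n‖ ≤ (1 - r) δ / 2`, the excess of `‖y n‖` over `δ / 2`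
  -- contracts by the factor `r`
  have hcontract : ∀ᶠ n in atTop, ‖y n‖ - δ / 2 ≤ r * (‖y (n - 1)‖ - δ / 2) := by
    have hsmall : 0 < (1 - r) * (δ / 2) := by nlinarith
    filter_upwards [hρ.abs.eventually (ge_mem_nhds hcr),
      hε.norm.eventually (ge_mem_nhds (norm_zero (E := E) ▸ hsmall)), hrec] with n hρn hεn hn
    calc ‖y n‖ - δ / 2 ≤ |ρ n| * ‖y (n - 1)‖ + ‖ε n‖ - δ / 2 := by
          rw [hn, ← Real.norm_eq_abs, ← norm_smul]; gcongr; exact norm_add_le _ _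
      _ ≤ r * (‖y (n - 1)‖ - δ / 2) := by nlinarith [norm_nonneg (y (n - 1))]
  obtain ⟨N, hN⟩ := eventually_atTop.1 hcontract
  have hgeom : ∀ n ≥ N, ‖y n‖ - δ / 2 ≤ r ^ (n - N) * (‖y N‖ - δ / 2) := by
    intro n hn
    induction n, hn using Nat.le_induction with
    | base => simp
    | succ n hn ih =>
      calc ‖y (n + 1)‖ - δ / 2 ≤ r * (‖y n‖ - δ / 2) := hN (n + 1) (by omega)
        _ ≤ r * (r ^ (n - N) * (‖y N‖ - δ / 2)) := by gcongr
        _ = r ^ (n + 1 - N) * (‖y N‖ - δ / 2) := by rw [Nat.sub_add_comm hn, pow_succ]; ring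
  have hvanish : Tendsto (fun n => r ^ (n - N) * (‖y N‖ - δ / 2)) atTop (𝓝 0) := by
    simpa using ((tendsto_pow_atTop_nhds_zero_of_lt_one hr0 hr1).comp
      (tendsto_sub_atTop_nat N)).mul_const (‖y N‖ - δ / 2)
  filter_upwards [eventually_ge_atTop N, hvanish.eventually (gt_mem_nhds (half_pos hδ))]
    with n hn hsmall
  rw [dist_zero_right]
  linarith [hgeom n hn]

theorem tendsto_of_linear_recurrence {ρ : ℕ → ℝ} {t x : ℕ → E} {c : ℝ} {L : E} (hc : |c| < 1)
    (hρ : Tendsto ρ atTop (𝓝 c)) (ht : Tendsto t atTop (𝓝 L))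
    (hrec : ∀ᶠ n in atTop, x n = ρ n • x (n - 1) + t n) :
    Tendsto x atTop (𝓝 ((1 - c)⁻¹ • L)) := by
  set ℓ := (1 - c)⁻¹ • L
  have hc1 : 1 - c ≠ 0 := by linarith [(abs_lt.1 hc).2]
  have hfixed : L + (c - 1) • ℓ = 0 := by
    rw [smul_smul, ← neg_sub, neg_mul, mul_inv_cancel₀ hc1, neg_one_smul, add_neg_cancel]
  have hε : Tendsto (fun n => t n + (ρ n - 1) • ℓ) atTop (𝓝 0) :=
    hfixed ▸ ht.add ((hρ.sub_const 1).smul_const ℓ)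
  have hy := tendsto_zero_of_linear_recurrence (y := fun n => x n - ℓ) hc hρ hε <| by
    filter_upwards [hrec] with n hn
    rw [hn, smul_sub, sub_smul, one_smul]; abel
  simpa using hy.add_const ℓ

end LinearRecurrence

theorem one_sub_one_div_pos_of_two_le {n : ℕ} (hn : 2 ≤ n) : 0 < 1 - 1 / (n : ℝ) := by
  have : 1 / (n : ℝ) ≤ 1 / 2 := by gcongr; exact_mod_cast hn
  linarith

theorem abs_add_one_sub_mul_log_one_sub_sub_le {x : ℝ} (hx0 : 0 ≤ x) (hx : x ≤ 1 / 2) :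
    |x + (1 - x) * log (1 - x) - x ^ 2 / 2| ≤ 3 * x ^ 3 := by
  have hx1 : |x| < 1 := by rw [abs_of_nonneg hx0]; linarith
  have htaylor := abs_log_sub_add_sum_range_le hx1 2
  simp only [Finset.sum_range_succ, Finset.sum_range_zero, abs_of_nonneg hx0] at htaylor
  norm_num at htaylor
  set R := x + x ^ 2 / 2 + log (1 - x)
  have hR : |R| ≤ 2 * x ^ 3 := by
    refine htaylor.trans ?_
    rw [div_le_iff₀ (by linarith)]
    nlinarith [pow_nonneg hx0 3]
  have heq : x + (1 - x) * log (1 - x) - x ^ 2 / 2 = x ^ 3 / 2 + (1 - x) * R := by ring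
  rw [heq]
  calc |x ^ 3 / 2 + (1 - x) * R| ≤ x ^ 3 / 2 + (1 - x) * |R| := by
        refine (abs_add_le _ _).trans ?_
        rw [abs_mul, abs_of_nonneg (by positivity), abs_of_nonneg (by linarith)]
    _ ≤ 3 * x ^ 3 := by nlinarith [pow_nonneg hx0 3, abs_nonneg R]

theorem tendsto_mul_one_add_mul_log_one_sub_one_div :
    Tendsto (fun n : ℕ => (n : ℝ) * (1 + (n - 1) * log (1 - 1 / n))) atTop (𝓝 (1 / 2)) := by
  have hbound : ∀ᶠ n : ℕ in atTop,
      ‖(n : ℝ) * (1 + (n - 1) * log (1 - 1 / n)) - 1 / 2‖ ≤ 3 / n := by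
    filter_upwards [eventually_ge_atTop 2] with n hn
    have hn2 : (2 : ℝ) ≤ n := by exact_mod_cast hn
    have hx : 1 / (n : ℝ) ≤ 1 / 2 := by gcongr
    have h := abs_add_one_sub_mul_log_one_sub_sub_le (by positivity) hx
    have hscale : (n : ℝ) * (1 + (n - 1) * log (1 - 1 / n)) - 1 / 2
        = n ^ 2 * (1 / n + (1 - 1 / n) * log (1 - 1 / n) - (1 / n) ^ 2 / 2) := by
      field_simp
    rw [Real.norm_eq_abs, hscale, abs_mul, abs_of_nonneg (by positivity)]
    calc (n : ℝ) ^ 2 * |1 / n + (1 - 1 / n) * log (1 - 1 / n) - (1 / n) ^ 2 / 2|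
        ≤ (n : ℝ) ^ 2 * (3 * (1 / n) ^ 3) := by gcongr
      _ = 3 / (n : ℝ) := by field_simp
  have := squeeze_zero_norm' hbound (tendsto_const_div_atTop_nhds_zero_nat 3)
  simpa using this.add_const (1 / 2 : ℝ)

theorem tendsto_mul_exp_sub_one_of_tendsto_mul {f : ℕ → ℝ} {a : ℝ}
    (h : Tendsto (fun n : ℕ => (n : ℝ) * f n) atTop (𝓝 a)) :
    Tendsto (fun n : ℕ => (n : ℝ) * (exp (f n) - 1)) atTop (𝓝 a) := by
  have hf : Tendsto f atTop (𝓝 0) := by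
    have := h.mul tendsto_one_div_atTop_nhds_zero_nat
    rw [mul_zero] at this
    refine this.congr' ?_
    filter_upwards [eventually_ne_atTop 0] with n hn
    field_simp
  -- `|exp u - 1 - u| ≤ u ^ 2`, so the error `n (exp (f n) - 1 - f n)` is at most `|n f n| |f n|`
  have herror : Tendsto (fun n : ℕ => (n : ℝ) * (exp (f n) - 1 - f n)) atTop (𝓝 0) := by
    refine squeeze_zero_norm' ?_ (by simpa using h.norm.mul hf.norm)
    filter_upwards [hf.norm.eventually (ge_mem_nhds (norm_zero (E := ℝ) ▸ one_pos))] with n hn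
    rw [norm_mul, Real.norm_natCast, Real.norm_eq_abs, mul_assoc, ← sq, sq_abs]
    exact mul_le_mul_of_nonneg_left (abs_exp_sub_one_sub_id_le hn) n.cast_nonneg
  simpa [mul_sub] using h.add herror

theorem tendsto_one_sub_one_div_pow :
    Tendsto (fun n : ℕ => (1 - 1 / (n : ℝ)) ^ n) atTop (𝓝 (exp (-1))) := by
  simpa [div_eq_mul_inv, sub_eq_add_neg] using tendsto_one_add_div_pow_exp (-1)

theorem tendsto_one_sub_one_div_pow_pred :
    Tendsto (fun n : ℕ => (1 - 1 / (n : ℝ)) ^ (n - 1)) atTop (𝓝 (exp (-1))) := by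
  have h := tendsto_one_sub_one_div_pow.div
    (tendsto_const_nhds.sub tendsto_one_div_atTop_nhds_zero_nat) (by norm_num : (1 : ℝ) - 0 ≠ 0)
  rw [sub_zero, div_one] at h
  refine h.congr' ?_
  filter_upwards [eventually_ge_atTop 2] with n hn
  rw [Pi.div_apply, div_eq_iff (one_sub_one_div_pos_of_two_le hn).ne', ← pow_succ,
    Nat.sub_add_cancel (by omega)]

theorem tendsto_one_div_pow_self : Tendsto (fun n : ℕ => (1 / (n : ℝ)) ^ n) atTop (𝓝 0) := by
  refine squeeze_zero' (Eventually.of_forall fun n => by positivity) ?_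
    tendsto_one_div_atTop_nhds_zero_nat
  filter_upwards [eventually_ge_atTop 1] with n hn
  exact pow_le_of_le_one (by positivity) (div_le_one_of_le₀ (by exact_mod_cast hn) n.cast_nonneg)
    (by omega)

theorem tendsto_one_sub_one_sub_one_div_pow_sub_one_div_pow :
    Tendsto (fun n : ℕ => 1 - (1 - 1 / (n : ℝ)) ^ n - (1 / (n : ℝ)) ^ n) atTop
      (𝓝 (1 - exp (-1))) := by
  simpa using (tendsto_const_nhds.sub tendsto_one_sub_one_div_pow).sub tendsto_one_div_pow_self

theorem exp_one_mul_one_sub_one_div_pow_pred {n : ℕ} (hn : 2 ≤ n) :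
    exp 1 * (1 - 1 / (n : ℝ)) ^ (n - 1) = exp (1 + (n - 1) * log (1 - 1 / n)) := by
  rw [exp_add, ← Nat.cast_pred (by omega), exp_nat_mul,
    exp_log (one_sub_one_div_pos_of_two_le hn)]

theorem tendsto_mul_exp_one_mul_one_sub_one_div_pow_pred_sub_one :
    Tendsto (fun n : ℕ => (n : ℝ) * (exp 1 * (1 - 1 / (n : ℝ)) ^ (n - 1) - 1)) atTop
      (𝓝 (1 / 2)) := by
  refine (tendsto_mul_exp_sub_one_of_tendsto_mul
    tendsto_mul_one_add_mul_log_one_sub_one_div).congr' ?_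
  filter_upwards [eventually_ge_atTop 2] with n hn
  rw [exp_one_mul_one_sub_one_div_pow_pred hn]

theorem Delta_asymptotics_general
    (B : ℕ → ℝ)
    (hB : ∀ n : ℕ, 2 ≤ n →
      B n = B (n-1) + (1 - B (n-1) * (1 - 1/(n:ℝ))^(n-1)) /
        (1 - (1 - 1/(n:ℝ))^n - (1/(n:ℝ))^n)) :
    Tendsto (fun n : ℕ => (n:ℝ) * (Real.exp 1 - B n)) atTop (𝓝 (Real.exp 1 / 2)) := by
  have hD := tendsto_one_sub_one_sub_one_div_pow_sub_one_div_pow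
  have hexp_pos := exp_pos (-1)
  have hexp_lt := exp_neg_one_lt_half
  have hD0 : 1 - exp (-1) ≠ 0 := by linarith
  have hρ := (tendsto_const_nhds (x := (1 : ℝ)).sub
    (tendsto_one_sub_one_div_pow_pred.div hD hD0)).mul (tendsto_natCast_div_add_atTop (-1 : ℝ))
  have ht := tendsto_mul_exp_one_mul_one_sub_one_div_pow_pred_sub_one.div hD hD0
  have hc₀ : |(1 - exp (-1) / (1 - exp (-1))) * 1| < 1 := by
    have hpos : 0 < exp (-1) / (1 - exp (-1)) := div_pos hexp_pos (by linarith)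
    have hlt : exp (-1) / (1 - exp (-1)) < 1 := by rw [div_lt_one (by linarith)]; linarith
    rw [mul_one, abs_lt]
    constructor <;> linarith
  convert tendsto_of_linear_recurrence hc₀ hρ ht ?_ using 2
  · rw [smul_eq_mul, mul_one, sub_sub_cancel, inv_div]
    field_simp
    rw [← exp_add]
    norm_num
  -- what remains is the linear recurrence for `n Δ n`
  filter_upwards [eventually_ge_atTop 2, hD.eventually_ne hD0] with n hn hDn
  have hn1 : (n : ℝ) + -1 ≠ 0 := by
    have : (2 : ℝ) ≤ n := by exact_mod_cast hn
    linarith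
  simp only [Pi.div_apply, smul_eq_mul]
  rw [hB n hn, Nat.cast_pred (by omega)]
  field_simp
  ring

/-- n·(e − B(n)) → e/2 as n → ∞, i.e. Δ(n) = e − B(n) ~ (e/2)/n. -/
theorem Delta_asymptotics
    (B : ℕ → ℝ)
    (hB1 : B 1 = 0)
    (hB : ∀ n : ℕ, 2 ≤ n →
      B n = B (n-1) + (1 - B (n-1) * (1 - 1/(n:ℝ))^(n-1)) /
        (1 - (1 - 1/(n:ℝ))^n - (1/(n:ℝ))^n)) :
    Tendsto (fun n : ℕ => (n:ℝ) * (Real.exp 1 - B n)) atTop (𝓝 (Real.exp 1 / 2)) :=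
  Delta_asymptotics_general B hB
end

section
/- The sequence M2(n) converges as n → ∞, and its limit M2(∞) satisfies M2(∞) = (1/(1−e^{−1}))·(−1 + 2·M(∞) + Σ_{k≥2} (e^{−1}/k!)·M2(k)), where M(∞) = lim_{n→∞} M(n). (Numerically M2(∞) = 8.794530817….) -/
/-!
Write `x = 1 - 1/n` and `b(n,k)` for the binomial weights, and read the recurrence of `M2` as
`u(n) = r(n) + x^n u(n) + ∑_{k=2}^n b(n,k) u(k)` with forcing term
`r(n) = 1 + 2 x^n M(n) + 2 ∑_{k=2}^n b(n,k) M(k)`, which by the recurrence of `M` is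
`2 M(n) - 1 → 2 M(∞) - 1`.

Moving the terms `k = 0` and `k = n` to the left gives
`u(n) · (b(n,1) + ∑_{2 ≤ k < n} b(n,k)) = r(n) + ∑_{2 ≤ k < n} b(n,k) u(k)`,
and since `b(n,1) = x^(n-1) ≥ e⁻¹`, strong induction bounds `|u|` by `e · sup |r|`.
By the Poisson limit `b(n,k) → e⁻¹/k!`, the bound `b(n,k) ≤ 1/k!` and dominated convergence,
`∑_{k=2}^n b(n,k) u(k) → ∑_{k≥2} e⁻¹/k! · u(k)`, and passing to the limit in
`u(n) (1 - x^n) = r(n) + ∑_{k=2}^n b(n,k) u(k)` gives the formula.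
-/

open Filter Topology Finset

noncomputable def binomWeight (n k : ℕ) : ℝ :=
  (n.choose k : ℝ) * (1 / (n : ℝ)) ^ k * (1 - 1 / (n : ℝ)) ^ (n - k)

lemma one_sub_one_div_natCast_nonneg (n : ℕ) : 0 ≤ 1 - 1 / (n : ℝ) :=
  sub_nonneg.2 (by simpa only [one_div] using Nat.cast_inv_le_one n)

lemma binomWeight_nonneg (n k : ℕ) : 0 ≤ binomWeight n k := by
  have := one_sub_one_div_natCast_nonneg n
  unfold binomWeight; positivity

lemma binomWeight_le_one_div_factorial (n k : ℕ) : binomWeight n k ≤ 1 / k.factorial := by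
  have hx := one_sub_one_div_natCast_nonneg n
  have hn : (n : ℝ) * (1 / n) ≤ 1 := by
    rcases n.eq_zero_or_pos with rfl | hn
    · simp
    · rw [mul_one_div_cancel (by positivity)]
  calc binomWeight n k ≤ (n.choose k : ℝ) * (1 / (n : ℝ)) ^ k * 1 := by
        unfold binomWeight
        gcongr
        exact pow_le_one₀ hx (by simp)
    _ ≤ (n : ℝ) ^ k / k.factorial * (1 / (n : ℝ)) ^ k * 1 := by
        gcongr; exact Nat.choose_le_pow_div k n
    _ = ((n : ℝ) * (1 / n)) ^ k / k.factorial := by ring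
    _ ≤ 1 / k.factorial := by gcongr; exact pow_le_one₀ (by positivity) hn

lemma sum_range_binomWeight (n : ℕ) : ∑ k ∈ range (n + 1), binomWeight n k = 1 := by
  have := add_pow (1 / (n : ℝ)) (1 - 1 / (n : ℝ)) n
  rw [add_sub_cancel, one_pow] at this
  rw [this]
  exact sum_congr rfl fun k _ => by unfold binomWeight; ring

lemma binomWeight_zero (n : ℕ) : binomWeight n 0 = (1 - 1 / (n : ℝ)) ^ n := by
  simp [binomWeight]

lemma exp_neg_one_le_binomWeight_one {n : ℕ} (hn : n ≠ 0) :
    Real.exp (-1) ≤ binomWeight n 1 := by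
  obtain ⟨m, rfl⟩ := Nat.exists_eq_succ_of_ne_zero hn
  have hm : (1 - 1 / ((m + 1 : ℕ) : ℝ)) ^ m = ((1 + (m : ℝ)⁻¹) ^ m)⁻¹ := by
    rcases m.eq_zero_or_pos with rfl | hm
    · simp
    · rw [← inv_pow]; congr 1; push_cast; field_simp; ring
  have : binomWeight (m + 1) 1 = (1 - 1 / ((m + 1 : ℕ) : ℝ)) ^ m := by
    simp [binomWeight]; field_simp
  rw [this, hm, Real.exp_neg]
  exact inv_anti₀ (by positivity) Real.one_add_inv_pow_le_exp

lemma one_sub_binomWeight_zero_sub_binomWeight_self {n : ℕ} (hn : 2 ≤ n) :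
    1 - binomWeight n 0 - binomWeight n n =
      binomWeight n 1 + ∑ k ∈ Ico 2 n, binomWeight n k := by
  rw [← sum_range_binomWeight n, sum_range_succ, range_eq_Ico,
    sum_eq_sum_Ico_succ_bot (by omega), sum_eq_sum_Ico_succ_bot (by omega)]
  ring

lemma tendsto_binomWeight (k : ℕ) :
    Tendsto (binomWeight · k) atTop (𝓝 (Real.exp (-1) / k.factorial)) := by
  have h : Tendsto (fun n : ℕ => (n : ℝ) * (1 / n)) atTop (𝓝 1) :=
    tendsto_const_nhds.congr' <| (eventually_ge_atTop 1).mono fun n hn =>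
      (mul_one_div_cancel (by positivity)).symm
  simpa [binomWeight] using ProbabilityTheory.tendsto_choose_mul_pow_of_tendsto_mul_atTop k h

section BoundedWeights

variable {g : ℕ → ℝ} {C : ℝ}

lemma summable_one_div_factorial_add_two (C : ℝ) :
    Summable fun j : ℕ => C / ((j + 2).factorial : ℝ) := by
  have : Summable fun j : ℕ => 1 / (j.factorial : ℝ) := by
    simpa using Real.summable_pow_div_factorial 1
  simpa [div_eq_mul_inv] using ((summable_nat_add_iff 2).2 this).mul_left C

lemma summable_exp_neg_one_div_factorial_mul (hg : ∀ k, 2 ≤ k → |g k| ≤ C) :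
    Summable fun j : ℕ => Real.exp (-1) / ((j + 2).factorial : ℝ) * g (j + 2) := by
  refine (summable_one_div_factorial_add_two C).of_norm_bounded fun j => ?_
  have he : Real.exp (-1) ≤ 1 := Real.exp_le_one_iff.2 (by norm_num)
  rw [norm_mul, Real.norm_of_nonneg (by positivity), Real.norm_eq_abs, div_mul_eq_mul_div]
  gcongr
  calc Real.exp (-1) * |g (j + 2)| ≤ 1 * C := by
        gcongr
        exact hg _ (by omega)
    _ = C := one_mul C

lemma tendsto_sum_Icc_binomWeight_mul (hg : ∀ k, 2 ≤ k → |g k| ≤ C) :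
    Tendsto (fun n => ∑ k ∈ Icc 2 n, binomWeight n k * g k) atTop
      (𝓝 (∑' j : ℕ, Real.exp (-1) / ((j + 2).factorial : ℝ) * g (j + 2))) := by
  set f : ℕ → ℕ → ℝ :=
    fun n j => if j + 2 ≤ n then binomWeight n (j + 2) * g (j + 2) else 0
  have hsum (n : ℕ) : ∑ k ∈ Icc 2 n, binomWeight n k * g k = ∑' j, f n j := by
    rw [tsum_eq_sum (s := range (n - 1)) fun j hj => if_neg (by simp at hj; omega),
      ← Ico_add_one_right_eq_Icc, sum_Ico_eq_sum_range]
    exact sum_congr (by congr 1) fun j hj => by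
      simp only [mem_range] at hj; simp only [if_pos (show j + 2 ≤ n by omega), add_comm]
  simp only [hsum]
  refine tendsto_tsum_of_dominated_convergence (summable_one_div_factorial_add_two C)
    (fun j => ?_) (Eventually.of_forall fun n j => ?_)
  · refine ((tendsto_binomWeight (j + 2)).mul_const (g (j + 2))).congr' ?_
    filter_upwards [eventually_ge_atTop (j + 2)] with n hn
    simp only [f, if_pos hn]
  · simp only [f]
    split_ifs
    · rw [norm_mul, Real.norm_of_nonneg (binomWeight_nonneg _ _), Real.norm_eq_abs]
      calc binomWeight n (j + 2) * |g (j + 2)| ≤ 1 / (j + 2).factorial * C := by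
            gcongr
            · exact binomWeight_le_one_div_factorial _ _
            · exact hg _ (by omega)
        _ = C / (j + 2).factorial := by ring
    · simpa using div_nonneg ((abs_nonneg _).trans (hg 2 le_rfl)) (by positivity)

end BoundedWeights

def RoundRecurrence (r u : ℕ → ℝ) : Prop :=
  ∀ n, 2 ≤ n →
    u n = r n + (1 - 1 / (n : ℝ)) ^ n * u n + ∑ k ∈ Icc 2 n, binomWeight n k * u k

namespace RoundRecurrence

variable {r u : ℕ → ℝ}

lemma mul_eq (hu : RoundRecurrence r u) {n : ℕ} (hn : 2 ≤ n) :
    u n * (binomWeight n 1 + ∑ k ∈ Ico 2 n, binomWeight n k) =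
      r n + ∑ k ∈ Ico 2 n, binomWeight n k * u k := by
  have hrec := hu n hn
  rw [Icc_eq_cons_Ico hn, sum_cons, ← binomWeight_zero] at hrec
  rw [← one_sub_binomWeight_zero_sub_binomWeight_self hn]
  linear_combination hrec

lemma abs_le {R : ℝ} (hu : RoundRecurrence r u) (hr : ∀ n, 2 ≤ n → |r n| ≤ R) :
    ∀ n, 2 ≤ n → |u n| ≤ Real.exp 1 * R := by
  have hR0 : 0 ≤ R := (abs_nonneg _).trans (hr 2 le_rfl)
  set B := Real.exp 1 * R
  intro n
  induction n using Nat.strong_induction_on with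
  | _ n ih =>
  intro hn
  set s := ∑ k ∈ Ico 2 n, binomWeight n k
  have hb1 := exp_neg_one_le_binomWeight_one (n := n) (by omega)
  have hpos : 0 < binomWeight n 1 + s :=
    add_pos_of_pos_of_nonneg ((Real.exp_pos _).trans_le hb1)
      (sum_nonneg fun k _ => binomWeight_nonneg n k)
  have hR : R ≤ binomWeight n 1 * B :=
    calc R = Real.exp (-1) * B := by simp only [B, ← mul_assoc, ← Real.exp_add]; norm_num
      _ ≤ binomWeight n 1 * B := by gcongr
  have hsum : |∑ k ∈ Ico 2 n, binomWeight n k * u k| ≤ s * B :=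
    calc |∑ k ∈ Ico 2 n, binomWeight n k * u k|
        ≤ ∑ k ∈ Ico 2 n, binomWeight n k * |u k| := by
          refine (abs_sum_le_sum_abs _ _).trans_eq (sum_congr rfl fun k _ => ?_)
          rw [abs_mul, abs_of_nonneg (binomWeight_nonneg n k)]
      _ ≤ ∑ k ∈ Ico 2 n, binomWeight n k * B := by
          refine sum_le_sum fun k hk => ?_
          rw [mem_Ico] at hk
          exact mul_le_mul_of_nonneg_left (ih k hk.2 hk.1) (binomWeight_nonneg n k)
      _ = s * B := by rw [sum_mul]
  refine le_of_mul_le_mul_right ?_ hpos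
  calc |u n| * (binomWeight n 1 + s) = |r n + ∑ k ∈ Ico 2 n, binomWeight n k * u k| := by
        rw [← hu.mul_eq hn, abs_mul, abs_of_pos hpos]
    _ ≤ R + s * B := (abs_add_le _ _).trans (add_le_add (hr n hn) hsum)
    _ ≤ B * (binomWeight n 1 + s) := by linarith

lemma tendsto {ρ : ℝ} (hu : RoundRecurrence r u) (hr : Tendsto r atTop (𝓝 ρ)) :
    Summable (fun k : ℕ => Real.exp (-1) / ((k + 2).factorial : ℝ) * u (k + 2)) ∧
      Tendsto u atTop
        (𝓝 ((ρ + ∑' k : ℕ, Real.exp (-1) / ((k + 2).factorial : ℝ) * u (k + 2)) /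
          (1 - Real.exp (-1)))) := by
  obtain ⟨R, hR⟩ := isBounded_iff_forall_norm_le.1 (Metric.isBounded_range_of_tendsto r hr)
  have hub := hu.abs_le fun n _ => hR _ (Set.mem_range_self n)
  refine ⟨summable_exp_neg_one_div_factorial_mul hub, ?_⟩
  have hpow : Tendsto (fun n : ℕ => (1 - 1 / (n : ℝ)) ^ n) atTop (𝓝 (Real.exp (-1))) := by
    simpa [sub_eq_add_neg, neg_div] using Real.tendsto_one_add_div_pow_exp (-1)
  refine ((hr.add (tendsto_sum_Icc_binomWeight_mul hub)).div (tendsto_const_nhds.sub hpow)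
    (by linarith [Real.exp_lt_one_iff.2 (show (-1 : ℝ) < 0 by norm_num)])).congr' ?_
  filter_upwards [eventually_ge_atTop 2] with n hn
  have hlt : (1 - 1 / (n : ℝ)) ^ n < 1 :=
    pow_lt_one₀ (one_sub_one_div_natCast_nonneg n)
      (sub_lt_self _ (by positivity)) (by omega)
  rw [Pi.div_apply, div_eq_iff (sub_ne_zero.2 hlt.ne')]
  linear_combination -hu n hn

end RoundRecurrence

theorem M2_tendsto_general
    (M M2 : ℕ → ℝ) (Minf : ℝ)
    (hM : ∀ n : ℕ, 2 ≤ n →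
      M n = 1 + (1 - 1/(n:ℝ))^n * M n +
        ∑ k ∈ Finset.Icc 2 n,
          (n.choose k : ℝ) * (1/(n:ℝ))^k * (1 - 1/(n:ℝ))^(n-k) * M k)
    (hM2 : ∀ n : ℕ, 2 ≤ n →
      M2 n = 1 + 2 * (1 - 1/(n:ℝ))^n * M n + (1 - 1/(n:ℝ))^n * M2 n +
        2 * ∑ k ∈ Finset.Icc 2 n,
          (n.choose k : ℝ) * (1/(n:ℝ))^k * (1 - 1/(n:ℝ))^(n-k) * M k +
        ∑ k ∈ Finset.Icc 2 n,
          (n.choose k : ℝ) * (1/(n:ℝ))^k * (1 - 1/(n:ℝ))^(n-k) * M2 k)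
    (hMinf : Tendsto M atTop (𝓝 Minf)) :
    ∃ L : ℝ, Tendsto M2 atTop (𝓝 L) ∧
      Summable (fun k : ℕ => Real.exp (-1) / (Nat.factorial (k+2)) * M2 (k+2)) ∧
      L = 1 / (1 - Real.exp (-1)) *
        (-1 + 2 * Minf + ∑' k : ℕ, Real.exp (-1) / (Nat.factorial (k+2)) * M2 (k+2)) := by
  have hM2rec : RoundRecurrence (fun n => 2 * M n - 1) M2 := fun n hn => by
    unfold binomWeight
    linear_combination hM2 n hn - 2 * hM n hn
  obtain ⟨hsum, hlim⟩ := hM2rec.tendsto ((hMinf.const_mul 2).sub_const 1)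
  exact ⟨_, hlim, hsum, by ring⟩

/-- the second moment M2(n) converges, and its limit M2(∞) equals
    (1/(1−e⁻¹))·(−1 + 2·M(∞) + Σ_{k≥2} (e⁻¹/k!)·M2(k)). -/
theorem M2_tendsto
    (M M2 : ℕ → ℝ) (Minf : ℝ)
    (hM1 : M 1 = 0)
    (hM : ∀ n : ℕ, 2 ≤ n →
      M n = 1 + (1 - 1/(n:ℝ))^n * M n +
        ∑ k ∈ Finset.Icc 2 n,
          (n.choose k : ℝ) * (1/(n:ℝ))^k * (1 - 1/(n:ℝ))^(n-k) * M k)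
    (hM21 : M2 1 = 0)
    (hM2 : ∀ n : ℕ, 2 ≤ n →
      M2 n = 1 + 2 * (1 - 1/(n:ℝ))^n * M n + (1 - 1/(n:ℝ))^n * M2 n +
        2 * ∑ k ∈ Finset.Icc 2 n,
          (n.choose k : ℝ) * (1/(n:ℝ))^k * (1 - 1/(n:ℝ))^(n-k) * M k +
        ∑ k ∈ Finset.Icc 2 n,
          (n.choose k : ℝ) * (1/(n:ℝ))^k * (1 - 1/(n:ℝ))^(n-k) * M2 k)
    (hMinf : Tendsto M atTop (𝓝 Minf)) :
    ∃ L : ℝ, Tendsto M2 atTop (𝓝 L) ∧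
      Summable (fun k : ℕ => Real.exp (-1) / (Nat.factorial (k+2)) * M2 (k+2)) ∧
      L = 1 / (1 - Real.exp (-1)) *
        (-1 + 2 * Minf + ∑' k : ℕ, Real.exp (-1) / (Nat.factorial (k+2)) * M2 (k+2)) :=
  M2_tendsto_general M M2 Minf hM hM2 hMinf
end
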